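/- For every k ∈ ℂ, every pair of column vectors y, ỹ ∈ ℂ², and each ε ∈ {+1,−1}: P_ε·{ [a₂₁^{−ε}·b₁₁^{ε} − a₁₂^{−ε}·b₁₁^{−ε} + a₁₁^{−ε}·(b₁₂^{−ε} − b₂₁^{ε})]·I + 2·conj(k)·(b₁₁^{−ε}·|ỹ⟩ − b₁₂^{−ε}·|y⟩)·⟨y| + 2·|y⟩·[ (k²+conj(k)²)·(conj(a₁₁^ε)·⟨ỹ| − conj(a₁₂^ε)·⟨y|) − conj(k)·(conj(b₁₁^ε)·⟨ỹ| − conj(b₁₂^ε)·⟨y|) ] }·P_ε = −4k²·σ₂·P_{−ε}·[(a₁₁^{−ε}·|ỹ⟩ − a₁₂^{−ε}·|y⟩)·⟨y|]·P_{−ε}·σ₂, where P_ε = (I+εσ₃)/2. -/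

import Mathlib

open Matrix Complex ComplexConjugate

noncomputable section

abbrev M2 := Matrix (Fin 2) (Fin 2) ℂ
abbrev Vec2 := Matrix (Fin 2) (Fin 1) ℂ

def sigma3 : M2 := !![1, 0; 0, -1]
def sigma2 : M2 := !![0, -Complex.I; Complex.I, 0]

/-- ⟨u|M|v⟩ = u†Mv -/
def qform (u : Vec2) (M : M2) (v : Vec2) : ℂ := (uᴴ * M * v) 0 0

def a11 (k : ℂ) (y : Vec2) (ε : ℂ) : ℂ :=
  k * qform y (1 + ε • sigma3) y + conj k * qform y (1 - ε • sigma3) y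

def a12 (k : ℂ) (y yt : Vec2) (ε : ℂ) : ℂ :=
  k * qform y (1 + ε • sigma3) yt + conj k * qform y (1 - ε • sigma3) yt

def a21 (k : ℂ) (y yt : Vec2) (ε : ℂ) : ℂ :=
  k * qform yt (1 + ε • sigma3) y + conj k * qform yt (1 - ε • sigma3) y

def a22 (k : ℂ) (yt : Vec2) (ε : ℂ) : ℂ :=
  k * qform yt (1 + ε • sigma3) yt + conj k * qform yt (1 - ε • sigma3) yt

def b11 (k : ℂ) (y : Vec2) (ε : ℂ) : ℂ :=
  (k ^ 2 + (conj k) ^ 2) * qform y (1 + ε • sigma3) y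
    + 2 * k * conj k * qform y (1 - ε • sigma3) y

def b12 (k : ℂ) (y yt : Vec2) (ε : ℂ) : ℂ :=
  (k ^ 2 + (conj k) ^ 2) * qform y (1 + ε • sigma3) yt
    + 2 * k * conj k * qform y (1 - ε • sigma3) yt

def b21 (k : ℂ) (y yt : Vec2) (ε : ℂ) : ℂ :=
  (k ^ 2 + (conj k) ^ 2) * qform yt (1 + ε • sigma3) y
    + 2 * k * conj k * qform yt (1 - ε • sigma3) y

def c11 (k : ℂ) (y : Vec2) (ε : ℂ) : ℂ :=
  (k ^ 3 + 3 * k * (conj k) ^ 2) * qform y (1 + ε • sigma3) y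
    + ((conj k) ^ 3 + 3 * conj k * k ^ 2) * qform y (1 - ε • sigma3) y

def Δf (k : ℂ) (y yt : Vec2) (ε : ℂ) : ℂ :=
  (k ^ 2 - (conj k) ^ 2) ^ 2
      * (a21 k y yt ε * a12 k y yt ε - a11 k y ε * a22 k yt ε)
    + 2 * a11 k y ε * c11 k y (-ε) - b11 k y ε * b11 k y (-ε)
    + (k ^ 2 - (conj k) ^ 2)
      * (a21 k y yt ε * b11 k y (-ε) - a12 k y yt ε * b11 k y ε
          + a11 k y ε * (b12 k y yt ε - b21 k y yt (-ε)))

/-- P_ε = (I+εσ₃)/2 -/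
def Pe (ε : ℂ) : M2 := (1 / 2 : ℂ) • (1 + ε • sigma3)


/-! For `ε = ±1` the projections `P_ε = e e†` and `P_{-ε} = f f†` have rank one, so
`P M P = ⟨e|M|e⟩ P` for every `M`, while `σ₂ P_{-ε} σ₂ = P_ε`. Both sides are therefore multiples
of `P_ε`, and since `⟨u|(I + εσ₃)|v⟩ = 2 ⟨u|e⟩⟨e|v⟩` and `⟨u|(I - εσ₃)|v⟩ = 2 ⟨u|f⟩⟨f|v⟩`, the
comparison of the two multiples is a polynomial identity in `k`, `⟨e|y⟩`, `⟨f|y⟩`, `⟨e|ỹ⟩`,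
`⟨f|ỹ⟩` and their conjugates. -/

section OuterProduct

variable {n R : Type*} [Fintype n] [CommSemiring R]

theorem outer_mul_mul_outer (v : Matrix n (Fin 1) R) (w : Matrix (Fin 1) n R)
    (M : Matrix n n R) : v * w * M * (v * w) = (w * M * v) 0 0 • (v * w) := by
  have hscalar : w * M * v = (w * M * v) 0 0 • (1 : Matrix (Fin 1) (Fin 1) R) := by
    ext i j; fin_cases i; fin_cases j; simp
  calc v * w * M * (v * w) = v * (w * M * v) * w := by simp only [Matrix.mul_assoc]
    _ = v * ((w * M * v) 0 0 • (1 : Matrix (Fin 1) (Fin 1) R)) * w := by rw [← hscalar]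
    _ = (w * M * v) 0 0 • (v * w) := by rw [Matrix.mul_smul, Matrix.mul_one, Matrix.smul_mul]

theorem mul_outer_mul_apply_zero (g : Matrix (Fin 1) n R) (v : Matrix n (Fin 1) R)
    (w : Matrix (Fin 1) n R) (e : Matrix n (Fin 1) R) :
    (g * (v * w) * e) 0 0 = (g * v) 0 0 * (w * e) 0 0 := by
  rw [← Matrix.mul_assoc, Matrix.mul_assoc (g * v), Matrix.mul_apply, Fin.sum_univ_one]

theorem conjTranspose_mul_apply_zero_eq_star [StarRing R] (u v : Matrix n (Fin 1) R) :
    (uᴴ * v) 0 0 = star ((vᴴ * u) 0 0) := by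
  rw [← conjTranspose_apply, conjTranspose_mul, conjTranspose_conjTranspose]

end OuterProduct

theorem qform_smul_outer (u v e : Vec2) (c : ℂ) :
    qform u (c • (e * eᴴ)) v = c * conj ((eᴴ * u) 0 0) * (eᴴ * v) 0 0 := by
  rw [qform, Matrix.mul_smul, Matrix.smul_mul, Matrix.smul_apply, mul_outer_mul_apply_zero,
    conjTranspose_mul_apply_zero_eq_star u, smul_eq_mul, Complex.star_def, mul_assoc]

theorem one_add_smul_sigma3 (ε : ℂ) : 1 + ε • sigma3 = (2 : ℂ) • Pe ε := by
  rw [Pe, smul_smul]; norm_num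

theorem one_sub_smul_sigma3 (ε : ℂ) : 1 - ε • sigma3 = (2 : ℂ) • Pe (-ε) := by
  rw [← one_add_smul_sigma3, neg_smul, sub_eq_add_neg]

theorem trace_Pe (ε : ℂ) : (Pe ε).trace = 1 := by
  simp [Pe, sigma3, Matrix.trace_fin_two]

theorem sigma2_mul_Pe_neg_mul_sigma2 (ε : ℂ) : sigma2 * Pe (-ε) * sigma2 = Pe ε := by
  ext i j; fin_cases i <;> fin_cases j <;>
    simp [Pe, sigma2, sigma3, Matrix.mul_apply, Fin.sum_univ_two, Matrix.one_apply, vecMul,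
      dotProduct] <;>
    ring_nf <;> simp only [I_sq] <;> ring

theorem Pe_one : Pe 1 = !![(1 : ℂ); 0] * !![(1 : ℂ); 0]ᴴ := by
  ext i j; fin_cases i <;> fin_cases j <;> norm_num [Pe, sigma3, Matrix.mul_apply]

theorem Pe_neg_one : Pe (-1) = !![(0 : ℂ); 1] * !![(0 : ℂ); 1]ᴴ := by
  ext i j; fin_cases i <;> fin_cases j <;> norm_num [Pe, sigma3, Matrix.mul_apply]

theorem exists_Pe_eq_outer {ε : ℂ} (hε : ε = 1 ∨ ε = -1) :
    ∃ e f : Vec2, Pe ε = e * eᴴ ∧ Pe (-ε) = f * fᴴ := by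
  rcases hε with rfl | rfl
  · exact ⟨_, _, Pe_one, Pe_neg_one⟩
  · exact ⟨_, _, Pe_neg_one, by rw [neg_neg, Pe_one]⟩

theorem conjTranspose_mul_self_eq_one_of_Pe_eq_outer {ε : ℂ} {e : Vec2} (he : Pe ε = e * eᴴ) :
    (eᴴ * e) 0 0 = 1 := by
  rw [← trace_Pe ε, he, trace_mul_comm, trace_fin_one]

theorem lemma2_second (k : ℂ) (y yt : Vec2) (ε : ℂ) (hε : ε = 1 ∨ ε = -1) :
    Pe ε * ((a21 k y yt (-ε) * b11 k y ε - a12 k y yt (-ε) * b11 k y (-ε)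
          + a11 k y (-ε) * (b12 k y yt (-ε) - b21 k y yt ε)) • (1 : M2)
        + (2 * conj k) • ((b11 k y (-ε) • yt - b12 k y yt (-ε) • y) * yᴴ)
        + (2 : ℂ) • (y *
            ((k ^ 2 + (conj k) ^ 2) • (conj (a11 k y ε) • ytᴴ - conj (a12 k y yt ε) • yᴴ)
              - conj k • (conj (b11 k y ε) • ytᴴ - conj (b12 k y yt ε) • yᴴ)))) * Pe ε
      = (-(4 * k ^ 2)) •
          (sigma2 * (Pe (-ε) * ((a11 k y (-ε) • yt - a12 k y yt (-ε) • y) * yᴴ) * Pe (-ε))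
            * sigma2) := by
  obtain ⟨e, f, he, hf⟩ := exists_Pe_eq_outer hε
  rw [he, outer_mul_mul_outer, hf, outer_mul_mul_outer, Matrix.mul_smul, Matrix.smul_mul, ← hf,
    sigma2_mul_Pe_neg_mul_sigma2, he, smul_smul]
  congr 1
  simp only [a11, a12, a21, b11, b12, b21, one_add_smul_sigma3, one_sub_smul_sigma3, neg_neg, he,
    hf, qform_smul_outer]
  simp only [Matrix.mul_add, Matrix.add_mul, Matrix.mul_sub, Matrix.sub_mul, Matrix.mul_smul,
    Matrix.smul_mul, Matrix.mul_one, Matrix.add_apply, Matrix.sub_apply, Matrix.smul_apply,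
    smul_eq_mul, mul_outer_mul_apply_zero, conjTranspose_mul_self_eq_one_of_Pe_eq_outer he,
    conjTranspose_mul_apply_zero_eq_star y, conjTranspose_mul_apply_zero_eq_star yt]
  simp only [map_add, map_mul, map_pow, Complex.conj_conj, Complex.conj_ofNat, Complex.star_def]
  ring
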